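/- arXiv:2105.02146 — 2 statements merged into one kernel-verified Lean document; each statement's English description precedes it below -/
import Mathlib

section
/- Let F > 0, k > 0, d, t be reals with d + t − k > 0, and let S ≥ 0 and S_w ≥ 0 be reals (so that d + S + t − k > 0). Then F(d + S_w + t − 1)/(k(d + S + t − k)) ≤ F(d + t − 1)/(k(d + t − k)) if and only if S_w ≤ ((d + t − 1)/(d + t − k))·S. -/
theorem add_div_add_le_div_iff {K : Type*} [Field K] [LinearOrder K] [IsStrictOrderedRing K]
    {a b s x : K} (ha : 0 < a) (has : 0 < a + s) :
    (b + x) / (a + s) ≤ b / a ↔ x ≤ b / a * s := by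
  rw [div_le_div_iff₀ has ha, div_mul_eq_mul_div, le_div_iff₀ ha]
  constructor <;> intro h <;> linarith

theorem bs_mscr_threshold_iff_general
    (F k d t S Sw : ℝ) (hF : 0 < F) (hk : 0 < k)
    (hpos : 0 < d + t - k) (hS : 0 ≤ S) :
    F * (d + Sw + t - 1) / (k * (d + S + t - k))
        ≤ F * (d + t - 1) / (k * (d + t - k))
      ↔ Sw ≤ ((d + t - 1) / (d + t - k)) * S := by
  have hcost (x y : ℝ) : F * x / (k * y) = F / k * (x / y) := mul_div_mul_comm F x k y
  rw [hcost, hcost, mul_le_mul_iff_right₀ (div_pos hF hk),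
    show d + Sw + t - 1 = d + t - 1 + Sw by ring, show d + S + t - k = d + t - k + S by ring]
  exact add_div_add_le_div_iff hpos (by linarith)

/-- BS-MSCR analogue of inequality (16): using the base stations reduces the
BS-MSCR repair bandwidth cost below the purely-local cost iff
S_w ≤ ((d+t−1)/(d+t−k))·S. -/
theorem bs_mscr_threshold_iff
    (F k d t S Sw : ℝ) (hF : 0 < F) (hk : 0 < k)
    (hpos : 0 < d + t - k) (hS : 0 ≤ S) (hSw : 0 ≤ Sw) :
    F * (d + Sw + t - 1) / (k * (d + S + t - k))
        ≤ F * (d + t - 1) / (k * (d + t - k))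
      ↔ Sw ≤ ((d + t - 1) / (d + t - k)) * S :=
  bs_mscr_threshold_iff_general F k d t S Sw hF hk hpos hS
end

section
/- (Correctness of one step of Algorithm 1, BS-MSCR case.) Let F > 0, k > 0, t be reals, let d̄ and b̄ be reals with b̄ + t − k > 0, and let w_i ≥ 0 and b_i > 0 be reals. Then F(d̄ + w_i b_i + t − 1)/(k(b̄ + b_i + t − k)) ≤ F(d̄ + t − 1)/(k(b̄ + t − k)) if and only if w_i ≤ (d̄ + t − 1)/(b̄ + t − k). Hence, including base station i (at its full link capacity b_i) does not increase the BS-MSCR repair bandwidth cost exactly when its cost w_i does not exceed the threshold w̄_t = (d̄ + t − 1)/(b̄ + t − k). -/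
/-! After cancelling the positive factor `F / k`, this is the mediant property: for positive
denominators, `(a + c) / (b + d)` lies on the same side of `a / b` as `c / d`, and here
`c / d = wᵢ bᵢ / bᵢ = wᵢ`. -/

section Mediant

variable {α : Type*} [Field α] [LinearOrder α] [IsStrictOrderedRing α] {a b c d : α}

theorem add_div_add_le_div_iff_s10 (hb : 0 < b) (hd : 0 < d) :
    (a + c) / (b + d) ≤ a / b ↔ c / d ≤ a / b := by
  rw [div_le_div_iff₀ (add_pos hb hd) hb, div_le_div_iff₀ hd hb, add_mul, mul_add,
    add_le_add_iff_left]

theorem add_mul_div_add_le_div_iff (w : α) (hb : 0 < b) (hd : 0 < d) :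
    (a + w * d) / (b + d) ≤ a / b ↔ w ≤ a / b := by
  rw [add_div_add_le_div_iff_s10 hb hd, mul_div_cancel_right₀ w hd.ne']

end Mediant

theorem algorithm1_step_mscr_general
    (F k t dbar bbar wi bi : ℝ) (hF : 0 < F) (hk : 0 < k)
    (hpos : 0 < bbar + t - k) (hbi : 0 < bi) :
    F * (dbar + wi * bi + t - 1) / (k * (bbar + bi + t - k))
        ≤ F * (dbar + t - 1) / (k * (bbar + t - k))
      ↔ wi ≤ (dbar + t - 1) / (bbar + t - k) := by
  have hnum : dbar + wi * bi + t - 1 = (dbar + t - 1) + wi * bi := by ring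
  have hden : bbar + bi + t - k = (bbar + t - k) + bi := by ring
  rw [mul_div_mul_comm, mul_div_mul_comm, mul_le_mul_iff_right₀ (div_pos hF hk), hnum, hden]
  exact add_mul_div_add_le_div_iff wi hpos hbi

/-- Correctness of one step of Algorithm 1, BS-MSCR case: adding base
station i at full capacity bᵢ does not increase the BS-MSCR cost iff
wᵢ ≤ (d̄ + t − 1)/(b̄ + t − k). -/
theorem algorithm1_step_mscr
    (F k t dbar bbar wi bi : ℝ) (hF : 0 < F) (hk : 0 < k)
    (hpos : 0 < bbar + t - k) (hwi : 0 ≤ wi) (hbi : 0 < bi) :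
    F * (dbar + wi * bi + t - 1) / (k * (bbar + bi + t - k))
        ≤ F * (dbar + t - 1) / (k * (bbar + t - k))
      ↔ wi ≤ (dbar + t - 1) / (bbar + t - k) :=
  algorithm1_step_mscr_general F k t dbar bbar wi bi hF hk hpos hbi
end
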